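/- arXiv:2205.10694 — 4 statements merged into one kernel-verified Lean document; each statement's English description precedes it below -/
import Mathlib

section
/- Let G be an infinite discrete group and let ℓ¹(ℕ) carry the pointwise product. Then the generalized group algebra (ℓ¹(G, ℓ¹(ℕ)), ∗) is not strongly Arens irregular; more precisely, its right topological center Z_t^{(r)}(ℓ¹(G, ℓ¹(ℕ))**) strictly contains the canonical image of ℓ¹(G, ℓ¹(ℕ)). -/
open NormedSpace ContinuousLinearMap

section ArensFramework

variable {B : Type*} [NormedAddCommGroup B] [NormedSpace ℂ B]

noncomputable def rightTranslate (m : B →L[ℂ] B →L[ℂ] B) (ω : StrongDual ℂ B) (a : B) : StrongDual ℂ B :=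
  ω.comp (m a)

noncomputable def leftTranslate (m : B →L[ℂ] B →L[ℂ] B) (ω : StrongDual ℂ B) (a : B) : StrongDual ℂ B :=
  ω.comp (m.flip a)

noncomputable def subL (m : B →L[ℂ] B →L[ℂ] B) (H : StrongDual ℂ (StrongDual ℂ B)) (ω : StrongDual ℂ B) :
    StrongDual ℂ B :=
  LinearMap.mkContinuous
    { toFun := fun a => H (rightTranslate m ω a)
      map_add' := fun a b => by
        simp [rightTranslate, map_add, ContinuousLinearMap.comp_add]
      map_smul' := fun c a => by
        simp [rightTranslate, map_smul, ContinuousLinearMap.comp_smulₛₗ] }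
    (‖H‖ * ‖ω‖ * ‖m‖)
    (fun a => by
      have h1 : ‖H (rightTranslate m ω a)‖ ≤ ‖H‖ * ‖rightTranslate m ω a‖ := H.le_opNorm _
      have h2 : ‖rightTranslate m ω a‖ ≤ ‖ω‖ * ‖m a‖ := opNorm_comp_le _ _
      have h3 : ‖m a‖ ≤ ‖m‖ * ‖a‖ := m.le_opNorm a
      calc ‖H (rightTranslate m ω a)‖ ≤ ‖H‖ * (‖ω‖ * (‖m‖ * ‖a‖)) := by
            refine h1.trans (by gcongr; exact h2.trans (by gcongr))
        _ = ‖H‖ * ‖ω‖ * ‖m‖ * ‖a‖ := by ring)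

noncomputable def subR (m : B →L[ℂ] B →L[ℂ] B) (F : StrongDual ℂ (StrongDual ℂ B)) (ω : StrongDual ℂ B) :
    StrongDual ℂ B :=
  LinearMap.mkContinuous
    { toFun := fun a => F (leftTranslate m ω a)
      map_add' := fun a b => by
        simp [leftTranslate, map_add, ContinuousLinearMap.comp_add]
      map_smul' := fun c a => by
        simp [leftTranslate, map_smul, ContinuousLinearMap.comp_smulₛₗ] }
    (‖F‖ * ‖ω‖ * ‖m‖)
    (fun a => by
      have h1 : ‖F (leftTranslate m ω a)‖ ≤ ‖F‖ * ‖leftTranslate m ω a‖ := F.le_opNorm _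
      have h2 : ‖leftTranslate m ω a‖ ≤ ‖ω‖ * ‖m.flip a‖ := opNorm_comp_le _ _
      have h3 : ‖m.flip a‖ ≤ ‖m.flip‖ * ‖a‖ := m.flip.le_opNorm a
      calc ‖F (leftTranslate m ω a)‖ ≤ ‖F‖ * (‖ω‖ * (‖m‖ * ‖a‖)) := by
            refine h1.trans ?_
            gcongr
            exact h2.trans (by gcongr; exact h3.trans (by rw [opNorm_flip]))
        _ = ‖F‖ * ‖ω‖ * ‖m‖ * ‖a‖ := by ring)

/-- `(F □ H) ω = F (_H ω)` : first Arens product, evaluated at `ω`. -/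
noncomputable def arensBox (m : B →L[ℂ] B →L[ℂ] B) (F H : StrongDual ℂ (StrongDual ℂ B))
    (ω : StrongDual ℂ B) : ℂ :=
  F (subL m H ω)

/-- `(F ◇ H) ω = H (ω_F)` : second Arens product, evaluated at `ω`. -/
noncomputable def arensDia (m : B →L[ℂ] B →L[ℂ] B) (F H : StrongDual ℂ (StrongDual ℂ B))
    (ω : StrongDual ℂ B) : ℂ :=
  H (subR m F ω)

end ArensFramework

/-!
Averaging the first `n + 1` unit vectors of `ℓ¹(ℕ)` at the identity of `G` gives a bounded
sequence `aₙ` whose right multiplications `b ↦ b ∗ aₙ` have norm at most `1 / (n + 1)`.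
Consequently any weak-star cluster point `φ` of `(aₙ)` in the bidual satisfies
`ψ □ φ = 0 = ψ ◇ φ` for every `ψ`, so it lies in the right topological centre.
It is nonzero, as it takes the value `1` at `f ↦ ∑ₖ f(1)(k)`, but it annihilates every
functional `ω(b ∗ ·)`, which the image of `a` does only when `b ∗ a = 0` for all `b`,
i.e. when `a = 0`.
-/

open Filter Topology
open scoped lp

theorem exists_doubleDual_eq_of_tendsto {𝕜 E : Type*} [NontriviallyNormedField 𝕜]
    [ProperSpace 𝕜] [SeminormedAddCommGroup E] [NormedSpace 𝕜 E] {a : ℕ → E} {C : ℝ}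
    (ha : ∀ n, ‖a n‖ ≤ C) :
    ∃ φ : StrongDual 𝕜 (StrongDual 𝕜 E),
      ∀ ω c, Tendsto (fun n => ω (a n)) atTop (𝓝 c) → φ ω = c := by
  -- Banach–Alaoglu: a weak-star limit of the `J (a n)` along an ultrafilter finer than `atTop`.
  let U : Ultrafilter ℕ := .of atTop
  let x : ℕ → WeakDual 𝕜 (StrongDual 𝕜 E) :=
    fun n => WeakDual.toStrongDual.symm (inclusionInDoubleDual 𝕜 E (a n))
  let K := WeakDual.toStrongDual ⁻¹' Metric.closedBall (0 : StrongDual 𝕜 (StrongDual 𝕜 E)) C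
  have hx : ∀ n, x n ∈ K := fun n =>
    (dist_zero_right (inclusionInDoubleDual 𝕜 E (a n))).trans_le
      ((double_dual_bound 𝕜 E (a n)).trans (ha n))
  obtain ⟨φ, -, hφ⟩ := (WeakDual.isCompact_closedBall _ C : IsCompact K).ultrafilter_le_nhds
    (U.map x) (le_principal_iff.2 (mem_map.2 (univ_mem' hx)))
  refine ⟨WeakDual.toStrongDual φ, fun ω c hc => ?_⟩
  exact tendsto_nhds_unique (((WeakDual.eval_continuous ω).tendsto φ).comp hφ)
    (hc.mono_left (Ultrafilter.of_le _))

section RightTopologicalCentre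

variable {B : Type*} [NormedAddCommGroup B] [NormedSpace ℂ B] (m : B →L[ℂ] B →L[ℂ] B)

def rightTopologicalCentre : Set (StrongDual ℂ (StrongDual ℂ B)) :=
  {φ | ∀ ψ ω, arensBox m ψ φ ω = arensDia m ψ φ ω}

theorem range_inclusionInDoubleDual_subset_rightTopologicalCentre :
    Set.range (inclusionInDoubleDual ℂ B) ⊆ rightTopologicalCentre m := by
  rintro _ ⟨a, rfl⟩ ψ ω
  rfl

variable {m}

section WeakStarLimit

variable {a : ℕ → B} {φ : StrongDual ℂ (StrongDual ℂ B)}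
  (hφ : ∀ ω c, Tendsto (fun n => ω (a n)) atTop (𝓝 c) → φ ω = c)
  (ha : Tendsto (fun n => m.flip (a n)) atTop (𝓝 0))
include hφ ha

theorem subL_eq_zero_of_tendsto (ω : StrongDual ℂ B) : subL m φ ω = 0 := by
  ext b
  have h := ((ω.comp (apply ℂ B b)).continuous.tendsto 0).comp ha
  rw [map_zero] at h
  exact hφ _ 0 h

theorem mem_rightTopologicalCentre_of_tendsto : φ ∈ rightTopologicalCentre m := by
  intro ψ ω
  have h := ((ψ.comp (compL ℂ B B ℂ ω)).continuous.tendsto 0).comp ha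
  rw [map_zero] at h
  rw [arensBox, subL_eq_zero_of_tendsto hφ ha, map_zero, arensDia, hφ _ 0 h]

theorem notMem_range_inclusionInDoubleDual_of_tendsto (hinj : Function.Injective m.flip)
    (hφ₀ : φ ≠ 0) : φ ∉ Set.range (inclusionInDoubleDual ℂ B) := by
  rintro ⟨b, rfl⟩
  have hb : m.flip b = 0 := by
    ext c : 1
    exact SeparatingDual.eq_zero_of_forall_dual_eq_zero fun ω =>
      congr($(subL_eq_zero_of_tendsto hφ ha ω) c)
  exact hφ₀ (by rw [hinj (hb.trans (map_zero _).symm), map_zero])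

end WeakStarLimit

theorem range_inclusionInDoubleDual_ssubset_rightTopologicalCentre {a : ℕ → B} {C : ℝ}
    (hC : ∀ n, ‖a n‖ ≤ C) (ha : Tendsto (fun n => m.flip (a n)) atTop (𝓝 0))
    (hinj : Function.Injective m.flip) {ω₀ : StrongDual ℂ B} (hω₀ : ∀ n, ω₀ (a n) = 1) :
    Set.range (inclusionInDoubleDual ℂ B) ⊂ rightTopologicalCentre m := by
  obtain ⟨φ, hφ⟩ := exists_doubleDual_eq_of_tendsto (𝕜 := ℂ) hC
  have hφ₀ : φ ≠ 0 := by
    rintro rfl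
    exact zero_ne_one (hφ ω₀ 1 (by simp [hω₀]))
  refine (Set.ssubset_iff_of_subset
    (range_inclusionInDoubleDual_subset_rightTopologicalCentre m)).2 ?_
  exact    ⟨φ, mem_rightTopologicalCentre_of_tendsto hφ ha,
      notMem_range_inclusionInDoubleDual_of_tendsto hφ ha hinj hφ₀⟩

end RightTopologicalCentre

noncomputable def basisAverage (n : ℕ) : ℓ¹(ℕ, ℂ) :=
  ((n : ℂ) + 1)⁻¹ • ∑ k ∈ Finset.range (n + 1), lp.single 1 k 1

theorem basisAverage_apply (n k : ℕ) :
    basisAverage n k = if k ∈ Finset.range (n + 1) then ((n : ℂ) + 1)⁻¹ else 0 := by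
  simp only [basisAverage, lp.coeFn_smul, lp.coeFn_sum, lp.coeFn_single, Pi.smul_apply,
    Finset.sum_apply, Finset.sum_pi_single, smul_eq_mul, mul_ite, mul_one, mul_zero]

theorem norm_natCast_add_one_inv (n : ℕ) : ‖((n : ℂ) + 1)⁻¹‖ = ((n : ℝ) + 1)⁻¹ := by
  rw [norm_inv, ← Nat.cast_add_one, Complex.norm_natCast, Nat.cast_add_one]

theorem norm_basisAverage_apply_le (n k : ℕ) : ‖basisAverage n k‖ ≤ ((n : ℝ) + 1)⁻¹ := by
  rw [basisAverage_apply]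
  split_ifs
  · rw [norm_natCast_add_one_inv]
  · rw [norm_zero]; positivity

theorem norm_basisAverage_le (n : ℕ) : ‖basisAverage n‖ ≤ 1 := by
  calc ‖basisAverage n‖
        = ‖((n : ℂ) + 1)⁻¹‖ * ‖∑ k ∈ Finset.range (n + 1), (lp.single 1 k 1 : ℓ¹(ℕ, ℂ))‖ :=
          norm_smul _ _
    _ ≤ ((n : ℝ) + 1)⁻¹ * ∑ k ∈ Finset.range (n + 1), ‖(lp.single 1 k 1 : ℓ¹(ℕ, ℂ))‖ := by
        rw [norm_natCast_add_one_inv]; gcongr; exact norm_sum_le _ _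
    _ = 1 := by
        simpa [lp.norm_single] using inv_mul_cancel₀ (Nat.cast_add_one_ne_zero (R := ℝ) n)

theorem tsum_basisAverage (n : ℕ) : ∑' k, basisAverage n k = 1 := by
  rw [tsum_eq_sum (s := Finset.range (n + 1)) fun k hk => by rw [basisAverage_apply, if_neg hk],
    Finset.sum_congr rfl fun k hk => by rw [basisAverage_apply, if_pos hk]]
  simpa using mul_inv_cancel₀ (Nat.cast_add_one_ne_zero (R := ℂ) n)

section Convolution

variable {G : Type*} [Group G]

def IsConvolution (m : ℓ¹(G, ℓ¹(ℕ, ℂ)) →L[ℂ] ℓ¹(G, ℓ¹(ℕ, ℂ)) →L[ℂ] ℓ¹(G, ℓ¹(ℕ, ℂ))) :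
    Prop :=
  ∀ f g x k, HasSum (fun s : G => f s k * g (s⁻¹ * x) k) (m f g x k)

variable [DecidableEq G]
  {m : ℓ¹(G, ℓ¹(ℕ, ℂ)) →L[ℂ] ℓ¹(G, ℓ¹(ℕ, ℂ)) →L[ℂ] ℓ¹(G, ℓ¹(ℕ, ℂ))} (hm : IsConvolution m)
include hm

theorem IsConvolution.single_one_left_apply (u : ℓ¹(ℕ, ℂ)) (f : ℓ¹(G, ℓ¹(ℕ, ℂ))) (x : G)
    (k : ℕ) : m (lp.single 1 1 u) f x k = u k * f x k := by
  refine (hm _ f x k).unique ?_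
  have h := hasSum_single
    (f := fun s => (lp.single 1 1 u : ℓ¹(G, ℓ¹(ℕ, ℂ))) s k * f (s⁻¹ * x) k) 1
    fun s hs => by simp [hs]
  simpa using h

theorem IsConvolution.single_one_right_apply (f : ℓ¹(G, ℓ¹(ℕ, ℂ))) (u : ℓ¹(ℕ, ℂ)) (x : G)
    (k : ℕ) : m f (lp.single 1 1 u) x k = f x k * u k := by
  refine (hm f _ x k).unique ?_
  have h := hasSum_single
    (f := fun s => f s k * (lp.single 1 1 u : ℓ¹(G, ℓ¹(ℕ, ℂ))) (s⁻¹ * x) k) x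
    fun s hs => by simp [inv_mul_eq_one, hs]
  simpa using h

theorem IsConvolution.norm_flip_single_one_le {u : ℓ¹(ℕ, ℂ)} {ε : ℝ} (hε : 0 ≤ ε)
    (hu : ∀ k, ‖u k‖ ≤ ε) : ‖m.flip (lp.single 1 1 u)‖ ≤ ε := by
  refine opNorm_le_bound _ hε fun f => ?_
  calc ‖m f (lp.single 1 1 u)‖ ≤ ‖(ε : ℂ) • f‖ :=
        lp.norm_mono one_ne_zero fun x => lp.norm_mono one_ne_zero fun k => by
          rw [hm.single_one_right_apply, lp.coeFn_smul, Pi.smul_apply, lp.coeFn_smul,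
            Pi.smul_apply, smul_eq_mul, norm_mul, norm_mul, Complex.norm_of_nonneg hε,
            mul_comm ε]
          gcongr
          exact hu k
    _ = ε * ‖f‖ := by rw [norm_smul, Complex.norm_of_nonneg hε]

theorem IsConvolution.flip_injective : Function.Injective m.flip := by
  refine (injective_iff_map_eq_zero m.flip).2 fun f hf => ?_
  ext x k
  simpa [hm.single_one_left_apply] using congr($hf (lp.single 1 1 (lp.single 1 k 1)) x k)

end Convolution

theorem stmt3_general {G : Type*} [Group G]
    (m : lp (fun _ : G => lp (fun _ : ℕ => ℂ) 1) 1 →L[ℂ]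
      lp (fun _ : G => lp (fun _ : ℕ => ℂ) 1) 1 →L[ℂ]
      lp (fun _ : G => lp (fun _ : ℕ => ℂ) 1) 1)
    (hm : ∀ (f g : lp (fun _ : G => lp (fun _ : ℕ => ℂ) 1) 1) (x : G) (k : ℕ),
      HasSum (fun s : G => f s k * g (s⁻¹ * x) k) (m f g x k)) :
    Set.range (inclusionInDoubleDual ℂ (lp (fun _ : G => lp (fun _ : ℕ => ℂ) 1) 1)) ⊂
      {φ : StrongDual ℂ (StrongDual ℂ (lp (fun _ : G => lp (fun _ : ℕ => ℂ) 1) 1)) |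
        ∀ ψ : StrongDual ℂ (StrongDual ℂ (lp (fun _ : G => lp (fun _ : ℕ => ℂ) 1) 1)),
          ∀ ω : StrongDual ℂ (lp (fun _ : G => lp (fun _ : ℕ => ℂ) 1) 1),
            arensBox m ψ φ ω = arensDia m ψ φ ω} ∧
    ¬ (({φ : StrongDual ℂ (StrongDual ℂ (lp (fun _ : G => lp (fun _ : ℕ => ℂ) 1) 1)) |
          ∀ ψ : StrongDual ℂ (StrongDual ℂ (lp (fun _ : G => lp (fun _ : ℕ => ℂ) 1) 1)),
            ∀ ω : StrongDual ℂ (lp (fun _ : G => lp (fun _ : ℕ => ℂ) 1) 1),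
              arensBox m φ ψ ω = arensDia m φ ψ ω} =
          Set.range (inclusionInDoubleDual ℂ (lp (fun _ : G => lp (fun _ : ℕ => ℂ) 1) 1))) ∧
        ({φ : StrongDual ℂ (StrongDual ℂ (lp (fun _ : G => lp (fun _ : ℕ => ℂ) 1) 1)) |
          ∀ ψ : StrongDual ℂ (StrongDual ℂ (lp (fun _ : G => lp (fun _ : ℕ => ℂ) 1) 1)),
            ∀ ω : StrongDual ℂ (lp (fun _ : G => lp (fun _ : ℕ => ℂ) 1) 1),
              arensBox m ψ φ ω = arensDia m ψ φ ω} =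
          Set.range (inclusionInDoubleDual ℂ (lp (fun _ : G => lp (fun _ : ℕ => ℂ) 1) 1)))) := by
  classical
  have hconv : IsConvolution m := hm
  let a : ℕ → ℓ¹(G, ℓ¹(ℕ, ℂ)) := fun n => lp.single 1 1 (basisAverage n)
  have ha : Tendsto (fun n => m.flip (a n)) atTop (𝓝 0) :=
    squeeze_zero_norm
      (fun n => hconv.norm_flip_single_one_le (by positivity) (norm_basisAverage_apply_le n))
      (by simpa using tendsto_one_div_add_atTop_nhds_zero_nat (𝕜 := ℝ))
  let ω₀ := (lp.tsumCLM ℂ ℕ ℂ).comp (lp.evalCLM ℂ (fun _ : G => ℓ¹(ℕ, ℂ)) 1 1)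
  have hω₀ : ∀ n, ω₀ (a n) = 1 := fun n => by
    simpa [ω₀, a, lp.evalCLM] using tsum_basisAverage n
  have hZ : Set.range (inclusionInDoubleDual ℂ _) ⊂ rightTopologicalCentre m :=
    range_inclusionInDoubleDual_ssubset_rightTopologicalCentre
      (fun n => (lp.norm_single one_pos _ _).trans_le (norm_basisAverage_le n))
      ha hconv.flip_injective hω₀
  exact ⟨hZ, fun h => hZ.ne h.2.symm⟩

/-- for an infinite discrete group `G` and `ℓ¹(ℕ)` with the pointwise product,
the generalized group algebra `(ℓ¹(G, ℓ¹(ℕ)), ∗)` (convolution `m`, described coordinatewise)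
is not strongly Arens irregular: its right topological centre strictly contains the canonical
image of `ℓ¹(G, ℓ¹(ℕ))` in the bidual. -/
theorem stmt3 {G : Type*} [Group G] [Infinite G]
    (m : lp (fun _ : G => lp (fun _ : ℕ => ℂ) 1) 1 →L[ℂ]
      lp (fun _ : G => lp (fun _ : ℕ => ℂ) 1) 1 →L[ℂ]
      lp (fun _ : G => lp (fun _ : ℕ => ℂ) 1) 1)
    (hm : ∀ (f g : lp (fun _ : G => lp (fun _ : ℕ => ℂ) 1) 1) (x : G) (k : ℕ),
      HasSum (fun s : G => f s k * g (s⁻¹ * x) k) (m f g x k)) :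
    Set.range (inclusionInDoubleDual ℂ (lp (fun _ : G => lp (fun _ : ℕ => ℂ) 1) 1)) ⊂
      {φ : StrongDual ℂ (StrongDual ℂ (lp (fun _ : G => lp (fun _ : ℕ => ℂ) 1) 1)) |
        ∀ ψ : StrongDual ℂ (StrongDual ℂ (lp (fun _ : G => lp (fun _ : ℕ => ℂ) 1) 1)),
          ∀ ω : StrongDual ℂ (lp (fun _ : G => lp (fun _ : ℕ => ℂ) 1) 1),
            arensBox m ψ φ ω = arensDia m ψ φ ω} ∧
    ¬ (({φ : StrongDual ℂ (StrongDual ℂ (lp (fun _ : G => lp (fun _ : ℕ => ℂ) 1) 1)) |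
          ∀ ψ : StrongDual ℂ (StrongDual ℂ (lp (fun _ : G => lp (fun _ : ℕ => ℂ) 1) 1)),
            ∀ ω : StrongDual ℂ (lp (fun _ : G => lp (fun _ : ℕ => ℂ) 1) 1),
              arensBox m φ ψ ω = arensDia m φ ψ ω} =
          Set.range (inclusionInDoubleDual ℂ (lp (fun _ : G => lp (fun _ : ℕ => ℂ) 1) 1))) ∧
        ({φ : StrongDual ℂ (StrongDual ℂ (lp (fun _ : G => lp (fun _ : ℕ => ℂ) 1) 1)) |
          ∀ ψ : StrongDual ℂ (StrongDual ℂ (lp (fun _ : G => lp (fun _ : ℕ => ℂ) 1) 1)),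
            ∀ ω : StrongDual ℂ (lp (fun _ : G => lp (fun _ : ℕ => ℂ) 1) 1),
              arensBox m ψ φ ω = arensDia m ψ φ ω} =
          Set.range (inclusionInDoubleDual ℂ (lp (fun _ : G => lp (fun _ : ℕ => ℂ) 1) 1)))) :=
  stmt3_general m hm
end

section
/- Let G be an infinite discrete group, X = (ℓ¹(G), ∗) the convolution group algebra, and give ℓ¹(ℕ, X) the coordinatewise product (h • g)(n) = h(n) ∗ g(n). Let θ : ℓ∞(ℕ, X*) → ℓ¹(ℕ, X)* be the canonical isometric duality θ(f)(g) = Σₙ ⟨f(n), g(n)⟩. Then for every ω ∈ ℓ¹(ℕ, X)* and every h ∈ ℓ¹(ℕ, X), both translated functionals ω_h (defined by ω_h(g) = ω(h • g)) and _hω (defined by _hω(g) = ω(g • h)) belong to θ(c₀(ℕ, X*)). -/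
/-! Since `h ∈ ℓ¹(ℕ, X)`, the multiplication operators `g ↦ h(n) ∗ g` and `g ↦ g ∗ h(n)` have
norms tending to zero, so `g ↦ h • g` is a diagonal operator `diag (Tₙ)` on `ℓ¹(ℕ, X)` with
`‖Tₙ‖ → 0`. For any such operator, `ω ∘ diag (Tₙ) = θ (fₙ)` with `fₙ = ω ∘ ιₙ ∘ Tₙ`, where `ιₙ`
is the `n`-th coordinate embedding, and `‖fₙ‖ ≤ ‖ω‖ ‖Tₙ‖ → 0`. -/

open Filter Topology
open scoped ENNReal

section DiagonalOperator

variable {𝕜 X Y : Type*} [NontriviallyNormedField 𝕜] [NormedAddCommGroup X] [NormedSpace 𝕜 X]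
  [NormedAddCommGroup Y] [NormedSpace 𝕜 Y]

theorem lp.tendsto_norm_apply_of_one (h : lp (fun _ : ℕ => X) 1) :
    Tendsto (fun n => ‖h n‖) atTop (𝓝 0) := by
  have hsum := lp.hasSum_norm (p := 1) (by norm_num) h
  simp only [ENNReal.toReal_one, Real.rpow_one] at hsum
  exact hsum.summable.tendsto_atTop_zero

theorem lp.tendsto_norm_map_apply_of_one (L : X →L[𝕜] Y) (h : lp (fun _ : ℕ => X) 1) :
    Tendsto (fun n => ‖L (h n)‖) atTop (𝓝 0) := by
  have hbound : Tendsto (fun n => ‖L‖ * ‖h n‖) atTop (𝓝 0) := by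
    simpa using (lp.tendsto_norm_apply_of_one h).const_mul ‖L‖
  exact squeeze_zero (fun _ => norm_nonneg _) (fun n => L.le_opNorm (h n)) hbound

noncomputable def diagonalCoordFunctional (ω : StrongDual 𝕜 (lp (fun _ : ℕ => Y) 1))
    (T : ℕ → X →L[𝕜] Y) (n : ℕ) : StrongDual 𝕜 X :=
  ω.comp ((lp.singleContinuousLinearMap 𝕜 (fun _ : ℕ => Y) 1 n).comp (T n))

@[simp]
theorem diagonalCoordFunctional_apply (ω : StrongDual 𝕜 (lp (fun _ : ℕ => Y) 1))
    (T : ℕ → X →L[𝕜] Y) (n : ℕ) (x : X) :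
    diagonalCoordFunctional ω T n x = ω (lp.single (E := fun _ : ℕ => Y) 1 n (T n x)) :=
  rfl

variable (ω : StrongDual 𝕜 (lp (fun _ : ℕ => Y) 1)) (T : ℕ → X →L[𝕜] Y)

theorem norm_diagonalCoordFunctional_le (n : ℕ) :
    ‖diagonalCoordFunctional ω T n‖ ≤ ‖ω‖ * ‖T n‖ := by
  refine ContinuousLinearMap.opNorm_le_bound _ (mul_nonneg (norm_nonneg _) (norm_nonneg _))
    fun x => ?_
  rw [diagonalCoordFunctional_apply]
  calc ‖ω (lp.single (E := fun _ : ℕ => Y) 1 n (T n x))‖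
      ≤ ‖ω‖ * ‖lp.single (E := fun _ : ℕ => Y) 1 n (T n x)‖ := ω.le_opNorm _
    _ = ‖ω‖ * ‖T n x‖ := by rw [lp.norm_single (by norm_num)]
    _ ≤ ‖ω‖ * (‖T n‖ * ‖x‖) := by gcongr; exact (T n).le_opNorm x
    _ = ‖ω‖ * ‖T n‖ * ‖x‖ := (mul_assoc _ _ _).symm

theorem tendsto_norm_diagonalCoordFunctional (hT : Tendsto (fun n => ‖T n‖) atTop (𝓝 0)) :
    Tendsto (fun n => ‖diagonalCoordFunctional ω T n‖) atTop (𝓝 0) := by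
  have hbound : Tendsto (fun n => ‖ω‖ * ‖T n‖) atTop (𝓝 0) := by
    simpa using hT.const_mul ‖ω‖
  exact squeeze_zero (fun _ => norm_nonneg _) (norm_diagonalCoordFunctional_le ω T) hbound

theorem hasSum_diagonalCoordFunctional (Φ : lp (fun _ : ℕ => X) 1 → lp (fun _ : ℕ => Y) 1)
    (hΦ : ∀ g n, Φ g n = T n (g n)) (g : lp (fun _ : ℕ => X) 1) :
    HasSum (fun n => diagonalCoordFunctional ω T n (g n)) (ω (Φ g)) := by
  have hcoord : (fun n => diagonalCoordFunctional ω T n (g n)) =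
      fun n => ω (lp.single 1 n (Φ g n)) := by
    funext n
    rw [diagonalCoordFunctional_apply, hΦ]
  rw [hcoord]
  exact ω.hasSum (lp.hasSum_single (by norm_num) (Φ g))

theorem exists_tendsto_zero_duality_eq_comp_diagonal
    (θ : lp (fun _ : ℕ => StrongDual 𝕜 X) ∞ → StrongDual 𝕜 (lp (fun _ : ℕ => X) 1))
    (hθ : ∀ f g, HasSum (fun n => f n (g n)) (θ f g))
    (hT : Tendsto (fun n => ‖T n‖) atTop (𝓝 0))
    (Φ : lp (fun _ : ℕ => X) 1 →L[𝕜] lp (fun _ : ℕ => Y) 1) (hΦ : ∀ g n, Φ g n = T n (g n)) :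
    ∃ f : lp (fun _ : ℕ => StrongDual 𝕜 X) ∞,
      Tendsto (fun n => ‖f n‖) atTop (𝓝 0) ∧ θ f = ω.comp Φ := by
  have hlim := tendsto_norm_diagonalCoordFunctional ω T hT
  let f : lp (fun _ : ℕ => StrongDual 𝕜 X) ∞ :=
    ⟨diagonalCoordFunctional ω T, memℓp_infty hlim.bddAbove_range⟩
  refine ⟨f, hlim, ContinuousLinearMap.ext fun g => ?_⟩
  exact (hθ f g).unique (hasSum_diagonalCoordFunctional ω T Φ hΦ g)

end DiagonalOperator

theorem stmt6_general {G : Type*}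
    (m : lp (fun _ : G => ℂ) 1 →L[ℂ] lp (fun _ : G => ℂ) 1 →L[ℂ] lp (fun _ : G => ℂ) 1)
    (M : lp (fun _ : ℕ => lp (fun _ : G => ℂ) 1) 1 →L[ℂ]
      lp (fun _ : ℕ => lp (fun _ : G => ℂ) 1) 1 →L[ℂ]
      lp (fun _ : ℕ => lp (fun _ : G => ℂ) 1) 1)
    (hM : ∀ (h g : lp (fun _ : ℕ => lp (fun _ : G => ℂ) 1) 1) (n : ℕ),
      M h g n = m (h n) (g n))
    (θ : lp (fun _ : ℕ => StrongDual ℂ (lp (fun _ : G => ℂ) 1)) ∞ ≃ₗᵢ[ℂ]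
      StrongDual ℂ (lp (fun _ : ℕ => lp (fun _ : G => ℂ) 1) 1))
    (hθ : ∀ (f : lp (fun _ : ℕ => StrongDual ℂ (lp (fun _ : G => ℂ) 1)) ∞)
        (g : lp (fun _ : ℕ => lp (fun _ : G => ℂ) 1) 1),
      HasSum (fun n : ℕ => f n (g n)) (θ f g)) :
    ∀ (ω : StrongDual ℂ (lp (fun _ : ℕ => lp (fun _ : G => ℂ) 1) 1))
      (h : lp (fun _ : ℕ => lp (fun _ : G => ℂ) 1) 1),
      (∃ f : lp (fun _ : ℕ => StrongDual ℂ (lp (fun _ : G => ℂ) 1)) ∞,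
        Filter.Tendsto (fun n : ℕ => ‖f n‖) Filter.atTop (nhds 0) ∧
        θ f = ω.comp (M h)) ∧
      (∃ f : lp (fun _ : ℕ => StrongDual ℂ (lp (fun _ : G => ℂ) 1)) ∞,
        Filter.Tendsto (fun n : ℕ => ‖f n‖) Filter.atTop (nhds 0) ∧
        θ f = ω.comp (M.flip h)) := by
  intro ω h
  exact ⟨exists_tendsto_zero_duality_eq_comp_diagonal ω (fun n => m (h n)) θ hθ
      (lp.tendsto_norm_map_apply_of_one m h) (M h) (hM h),
    exists_tendsto_zero_duality_eq_comp_diagonal ω (fun n => m.flip (h n)) θ hθ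
      (lp.tendsto_norm_map_apply_of_one m.flip h) (M.flip h) fun g n => hM g h n⟩

/-- let `X = (ℓ¹(G), ∗)` (convolution `m`), give `B = ℓ¹(ℕ, X)` the
coordinatewise product `M`, and let `θ : ℓ∞(ℕ, X*) → ℓ¹(ℕ, X)*` be the canonical isometric
duality `θ(f)(g) = Σₙ ⟨f(n), g(n)⟩`.  Then for every `ω ∈ ℓ¹(ℕ, X)*` and `h ∈ ℓ¹(ℕ, X)`,
both translates `ω_h : g ↦ ω(h • g)` and `_hω : g ↦ ω(g • h)` lie in `θ(c₀(ℕ, X*))`. -/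
theorem stmt6 {G : Type*} [Group G] [Infinite G]
    (m : lp (fun _ : G => ℂ) 1 →L[ℂ] lp (fun _ : G => ℂ) 1 →L[ℂ] lp (fun _ : G => ℂ) 1)
    (hm : ∀ (f g : lp (fun _ : G => ℂ) 1) (x : G),
      HasSum (fun s : G => f s * g (s⁻¹ * x)) (m f g x))
    (M : lp (fun _ : ℕ => lp (fun _ : G => ℂ) 1) 1 →L[ℂ]
      lp (fun _ : ℕ => lp (fun _ : G => ℂ) 1) 1 →L[ℂ]
      lp (fun _ : ℕ => lp (fun _ : G => ℂ) 1) 1)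
    (hM : ∀ (h g : lp (fun _ : ℕ => lp (fun _ : G => ℂ) 1) 1) (n : ℕ),
      M h g n = m (h n) (g n))
    (θ : lp (fun _ : ℕ => StrongDual ℂ (lp (fun _ : G => ℂ) 1)) ∞ ≃ₗᵢ[ℂ]
      StrongDual ℂ (lp (fun _ : ℕ => lp (fun _ : G => ℂ) 1) 1))
    (hθ : ∀ (f : lp (fun _ : ℕ => StrongDual ℂ (lp (fun _ : G => ℂ) 1)) ∞)
        (g : lp (fun _ : ℕ => lp (fun _ : G => ℂ) 1) 1),
      HasSum (fun n : ℕ => f n (g n)) (θ f g)) :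
    ∀ (ω : StrongDual ℂ (lp (fun _ : ℕ => lp (fun _ : G => ℂ) 1) 1))
      (h : lp (fun _ : ℕ => lp (fun _ : G => ℂ) 1) 1),
      (∃ f : lp (fun _ : ℕ => StrongDual ℂ (lp (fun _ : G => ℂ) 1)) ∞,
        Filter.Tendsto (fun n : ℕ => ‖f n‖) Filter.atTop (nhds 0) ∧
        θ f = ω.comp (M h)) ∧
      (∃ f : lp (fun _ : ℕ => StrongDual ℂ (lp (fun _ : G => ℂ) 1)) ∞,
        Filter.Tendsto (fun n : ℕ => ‖f n‖) Filter.atTop (nhds 0) ∧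
        θ f = ω.comp (M.flip h)) :=
  stmt6_general m M hM θ hθ
end

section
/- Let G be an infinite discrete group and A a Banach algebra for which there is an algebra isomorphism ρ from (ℓ¹(ℕ), •) (pointwise product) onto a closed complemented subspace ρ(ℓ¹(ℕ)) of A. Let X = ℓ¹(G, A), fix pairwise distinct elements {hₙ}_{n∈ℕ} ⊆ G, and let 𝒰 be a non-principal ultrafilter on ℕ. Then the map φ_𝒰 : X* → ℂ defined by φ_𝒰(τ) = lim_𝒰 τ(δ_{hₙ} ⊗ ρ(eₙ)) is a well-defined, nonzero, bounded linear functional on X*, i.e. φ_𝒰 ∈ X**, and φ_𝒰 does not belong to the canonical image J(X) of X in X**. -/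
/-!
`φ_𝒰` is the 𝒰-limit of the bounded sequence `xₙ = δ_{hₙ} ⊗ ρ(eₙ)` in the weak-* sense: each
`τ(xₙ)` stays in a compact disc, so its 𝒰-limit exists, and it is linear and bounded in `τ`.
Complementation and the open mapping theorem give `ψ ∈ A*` with `ψ(ρ(eₙ)) = 1`; then
`τ = ψ ∘ Σ_g` is `1` on every `xₙ`, so `φ_𝒰 ≠ 0`. If `φ_𝒰 = J(y)`, then for each `g ∈ G` we have
`xₙ(g) = 0` for 𝒰-almost all `n`, since 𝒰 is non-principal and the `hₙ` are distinct; testing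
against the functionals `θ ∘ eval_g` gives `y(g) = 0`, so `y = 0`, contradicting `φ_𝒰 ≠ 0`.
-/

open NormedSpace ContinuousLinearMap
open Filter Topology Function

theorem Ultrafilter.eventually_ne_of_injective {α β : Type*} {𝒰 : Ultrafilter α}
    (h𝒰 : ∀ a, (𝒰 : Filter α) ≠ pure a) {f : α → β} (hf : Injective f) (b : β) :
    ∀ᶠ a in 𝒰, f a ≠ b := by
  rcases 𝒰.le_cofinite_or_eq_pure with hle | ⟨a, rfl⟩
  · exact hf.tendsto_cofinite.eventually (eventually_cofinite_ne b) |>.filter_mono hle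
  · exact absurd rfl (h𝒰 a)

theorem Ultrafilter.exists_tendsto_of_norm_le {α 𝕜 : Type*} [NormedAddCommGroup 𝕜]
    [ProperSpace 𝕜] (𝒰 : Ultrafilter α) {u : α → 𝕜} {C : ℝ} (hu : ∀ a, ‖u a‖ ≤ C) :
    ∃ z, Tendsto u 𝒰 (𝓝 z) := by
  obtain ⟨z, -, hz⟩ := (isCompact_closedBall (0 : 𝕜) C).ultrafilter_le_nhds (𝒰.map u)
    (le_principal_iff.mpr (mem_map.mpr (univ_mem' fun a => mem_closedBall_zero_iff.mpr (hu a))))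
  exact ⟨z, hz⟩

theorem NormedSpace.exists_tendsto_ultrafilter_bidual {α 𝕜 X : Type*}
    [NontriviallyNormedField 𝕜] [ProperSpace 𝕜] [NormedAddCommGroup X] [NormedSpace 𝕜 X]
    (𝒰 : Ultrafilter α) {x : α → X} {C : ℝ} (hx : ∀ a, ‖x a‖ ≤ C) :
    ∃ φ : StrongDual 𝕜 (StrongDual 𝕜 X), ∀ τ, Tendsto (fun a => τ (x a)) 𝒰 (𝓝 (φ τ)) := by
  have hbound (τ : StrongDual 𝕜 X) (a : α) : ‖τ (x a)‖ ≤ C * ‖τ‖ :=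
    (τ.le_opNorm _).trans (by rw [mul_comm]; gcongr; exact hx a)
  choose L hL using fun τ => 𝒰.exists_tendsto_of_norm_le (hbound τ)
  refine ⟨LinearMap.mkContinuous
    { toFun := L
      map_add' := fun τ σ => tendsto_nhds_unique (hL (τ + σ)) ((hL τ).add (hL σ))
      map_smul' := fun c τ => tendsto_nhds_unique (hL (c • τ)) ((hL τ).const_smul c) }
    C fun τ => le_of_tendsto (hL τ).norm (Eventually.of_forall (hbound τ)), hL⟩

theorem Submodule.isCompl_of_norm_add_eq {𝕜 E : Type*} [Ring 𝕜] [NormedAddCommGroup E]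
    [Module 𝕜 E] {p q : Submodule 𝕜 E} (hspan : ∀ a, ∃ b ∈ p, ∃ c ∈ q, a = b + c)
    (hnorm : ∀ b ∈ p, ∀ c ∈ q, ‖b + c‖ = ‖b‖ + ‖c‖) : IsCompl p q := by
  refine ⟨Submodule.disjoint_def.mpr fun b hbp hbq => ?_,
    codisjoint_iff.mpr (eq_top_iff.mpr fun a _ => ?_)⟩
  · have h := hnorm b hbp (-b) (q.neg_mem hbq)
    rw [add_neg_cancel, norm_zero, norm_neg] at h
    exact norm_eq_zero.mp (by linarith [norm_nonneg b])
  · obtain ⟨b, hb, c, hc, rfl⟩ := hspan a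
    exact Submodule.add_mem_sup hb hc

theorem ContinuousLinearMap.exists_comp_eq_of_closedComplemented {𝕜 E F G : Type*}
    [NontriviallyNormedField 𝕜] [NormedAddCommGroup E] [NormedSpace 𝕜 E] [CompleteSpace E]
    [NormedAddCommGroup F] [NormedSpace 𝕜 F] [CompleteSpace F]
    [AddCommGroup G] [Module 𝕜 G] [TopologicalSpace G]
    (T : E →L[𝕜] F) (hinj : Injective T) (hclosed : IsClosed (Set.range T))
    (hT : (LinearMap.range (T : E →ₗ[𝕜] F)).ClosedComplemented) (f : E →L[𝕜] G) :
    ∃ g : F →L[𝕜] G, g.comp T = f := by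
  obtain ⟨P, hP⟩ := hT
  refine ⟨f.comp ((T.equivRange hinj hclosed).symm.toContinuousLinearMap.comp P), ?_⟩
  ext x
  simp [hP ⟨T x, T.mem_range_self x⟩]

theorem lp.eq_zero_of_tendsto_dual_of_eventually_apply_eq_zero {α ι 𝕜 : Type*}
    [NontriviallyNormedField 𝕜] {E : ι → Type*} [∀ i, NormedAddCommGroup (E i)]
    [∀ i, NormedSpace 𝕜 (E i)] [∀ i, SeparatingDual 𝕜 (E i)]
    {p : ENNReal} [Fact (1 ≤ p)] {l : Filter α} [l.NeBot] {y : α → lp E p} {x : lp E p}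
    (hy : ∀ i, ∀ᶠ a in l, y a i = 0)
    (hx : ∀ τ : StrongDual 𝕜 (lp E p), Tendsto (fun a => τ (y a)) l (𝓝 (τ x))) : x = 0 := by
  ext i
  refine SeparatingDual.eq_zero_of_forall_dual_eq_zero (R := 𝕜) fun θ => ?_
  refine tendsto_nhds_unique (hx (θ.comp (lp.evalCLM 𝕜 E p i))) (tendsto_const_nhds.congr' ?_)
  filter_upwards [hy i] with a ha
  simp [lp.evalCLM, ha]

theorem stmt8_general {G : Type*} [DecidableEq G]
    {A : Type*} [NonUnitalNormedRing A] [NormedSpace ℂ A]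
    [CompleteSpace A]
    (ρ : lp (fun _ : ℕ => ℂ) 1 →L[ℂ] A)
    (hρ_inj : Function.Injective ρ)
    (hρ_closed : IsClosed (Set.range ρ))
    (hρ_compl : ∃ C : Submodule ℂ A, IsClosed (C : Set A) ∧
      (∀ a : A, ∃ b ∈ LinearMap.range (ρ : lp (fun _ : ℕ => ℂ) 1 →ₗ[ℂ] A), ∃ c ∈ C, a = b + c) ∧
      (∀ b ∈ LinearMap.range (ρ : lp (fun _ : ℕ => ℂ) 1 →ₗ[ℂ] A), ∀ c ∈ C, ‖b + c‖ = ‖b‖ + ‖c‖))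
    (h : ℕ → G) (h_inj : Function.Injective h)
    (𝒰 : Ultrafilter ℕ) (h𝒰 : ∀ n : ℕ, (𝒰 : Filter ℕ) ≠ pure n) :
    ∃ φ : StrongDual ℂ (StrongDual ℂ (lp (fun _ : G => A) 1)),
      (∀ τ : StrongDual ℂ (lp (fun _ : G => A) 1),
        Filter.Tendsto (fun n => τ (lp.single 1 (h n) (ρ (lp.single 1 n 1)))) (𝒰 : Filter ℕ)
          (nhds (φ τ))) ∧
      φ ≠ 0 ∧
      φ ∉ Set.range (inclusionInDoubleDual ℂ (lp (fun _ : G => A) 1)) := by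
  set x : ℕ → lp (fun _ : G => A) 1 := fun n => lp.single 1 (h n) (ρ (lp.single 1 n 1))
  have hx_norm (n : ℕ) : ‖x n‖ ≤ ‖ρ‖ := by
    simpa [x, lp.norm_single] using ρ.le_opNorm (lp.single 1 n 1)
  obtain ⟨φ, hφ⟩ := exists_tendsto_ultrafilter_bidual (𝕜 := ℂ) 𝒰 hx_norm
  obtain ⟨C, hC, hspan, hnorm⟩ := hρ_compl
  obtain ⟨ψ, hψ⟩ := ρ.exists_comp_eq_of_closedComplemented hρ_inj hρ_closed
    (.of_isCompl_isClosed (Submodule.isCompl_of_norm_add_eq hspan hnorm) hρ_closed hC)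
    (lp.tsumCLM ℂ ℕ ℂ)
  have hφ_one : φ (ψ.comp (lp.tsumCLM ℂ G A)) = 1 := by
    refine tendsto_nhds_unique (hφ _) (tendsto_const_nhds.congr fun n => ?_)
    simpa [x] using (congrArg (· (lp.single 1 n 1)) hψ).symm
  refine ⟨φ, hφ, fun h0 => by simp [h0] at hφ_one, ?_⟩
  rintro ⟨y, rfl⟩
  have hy : y = 0 := lp.eq_zero_of_tendsto_dual_of_eventually_apply_eq_zero
    (fun g => (𝒰.eventually_ne_of_injective h𝒰 h_inj g).mono fun n hn =>
      lp.single_apply_ne 1 _ _ (Ne.symm hn)) hφ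
  simp [hy] at hφ_one

/-- for a Banach algebra `A` containing a complemented algebraic copy of
`(ℓ¹(ℕ), •)` via `ρ`, pairwise distinct `{hₙ} ⊆ G` and a non-principal ultrafilter `𝒰`
on `ℕ`, the functional `φ_𝒰(τ) = lim_𝒰 τ(δ_{hₙ} ⊗ ρ(eₙ))` is a well-defined, nonzero,
bounded linear functional on `X* = ℓ¹(G, A)*`, which does not lie in the canonical image
`J(X)` of `X = ℓ¹(G, A)` in its bidual. -/
theorem stmt8 {G : Type*} [Group G] [Infinite G] [DecidableEq G]
    {A : Type*} [NonUnitalNormedRing A] [NormedSpace ℂ A]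
    [IsScalarTower ℂ A A] [SMulCommClass ℂ A A] [CompleteSpace A]
    (ρ : lp (fun _ : ℕ => ℂ) 1 →L[ℂ] A)
    (hρ_inj : Function.Injective ρ)
    (hρ_mul : ∀ a b ab : lp (fun _ : ℕ => ℂ) 1, (∀ k, ab k = a k * b k) → ρ ab = ρ a * ρ b)
    (hρ_closed : IsClosed (Set.range ρ))
    (hρ_compl : ∃ C : Submodule ℂ A, IsClosed (C : Set A) ∧
      (∀ a : A, ∃ b ∈ LinearMap.range (ρ : lp (fun _ : ℕ => ℂ) 1 →ₗ[ℂ] A), ∃ c ∈ C, a = b + c) ∧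
      (∀ b ∈ LinearMap.range (ρ : lp (fun _ : ℕ => ℂ) 1 →ₗ[ℂ] A), ∀ c ∈ C, ‖b + c‖ = ‖b‖ + ‖c‖))
    (h : ℕ → G) (h_inj : Function.Injective h)
    (𝒰 : Ultrafilter ℕ) (h𝒰 : ∀ n : ℕ, (𝒰 : Filter ℕ) ≠ pure n) :
    ∃ φ : StrongDual ℂ (StrongDual ℂ (lp (fun _ : G => A) 1)),
      (∀ τ : StrongDual ℂ (lp (fun _ : G => A) 1),
        Filter.Tendsto (fun n => τ (lp.single 1 (h n) (ρ (lp.single 1 n 1)))) (𝒰 : Filter ℕ)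
          (nhds (φ τ))) ∧
      φ ≠ 0 ∧
      φ ∉ Set.range (inclusionInDoubleDual ℂ (lp (fun _ : G => A) 1)) :=
  stmt8_general ρ hρ_inj hρ_closed hρ_compl h h_inj 𝒰 h𝒰
end

section
/- Let G be an infinite discrete group, A a Banach algebra, ρ : (ℓ¹(ℕ), •) → A an algebra isomorphism onto a closed complemented subspace of A, and {hᵢ}_{i∈ℕ} pairwise distinct elements of G. For each i let Eᵢ* ∈ A* be a Hahn–Banach extension of the coordinate functional on ρ(ℓ¹(ℕ)) given by ρ({xⱼ}ⱼ) ↦ xᵢ. Then the map η : ℓ¹(G) → A* defined by η(Σ_{g∈G} α_g δ_g) = Σ_{i=1}^∞ α_{hᵢ} Eᵢ* is a well-defined bounded linear operator with ‖η‖ ≤ sup_i ‖Eᵢ*‖, and the corresponding functional τ = θ(η) ∈ (ℓ¹(G) ⊗̂ A)* satisfies τ(δ_{hₙ} ⊗ ρ(eₙ)) = 1 for every n ∈ ℕ. -/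
open NormedSpace ContinuousLinearMap

/-! Injectivity and closed range make `ρ` an isomorphism onto its range, so the coordinate
functional `ρ x ↦ x i` on that range has norm at most `‖ρ⁻¹‖`, and Hahn–Banach extends it to `A`
with the same norm. Minimality of `‖E i‖` among all such extensions therefore bounds the family
`E` uniformly. Then `η` is restriction along `h` followed by `x ↦ Σᵢ xᵢ • E i`, and `τ` is
`f ↦ Σ_g η(δ_g)(f g)`: both are sums over `ℓ¹` of uniformly bounded operators. -/

open Function
open scoped lp

theorem ContinuousLinearMap.exists_extension_comp_norm_le {𝕜 X A : Type*} [RCLike 𝕜]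
    [NormedAddCommGroup X] [NormedSpace 𝕜 X] [CompleteSpace X]
    [NormedAddCommGroup A] [NormedSpace 𝕜 A] [CompleteSpace A]
    (ρ : X →L[𝕜] A) (hinj : Injective ρ) (hclo : IsClosed (Set.range ρ)) :
    ∃ C, 0 ≤ C ∧ ∀ φ : StrongDual 𝕜 X,
      ∃ F : StrongDual 𝕜 A, (∀ x, F (ρ x) = φ x) ∧ ‖F‖ ≤ C * ‖φ‖ := by
  set σ : ρ.range →L[𝕜] X := (ρ.equivRange hinj hclo).symm.toContinuousLinearMap
  refine ⟨‖σ‖, norm_nonneg σ, fun φ => ?_⟩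
  obtain ⟨F, hF, hFφ⟩ := exists_extension_norm_eq ρ.range (φ.comp σ)
  refine ⟨F, fun x => by simpa [σ] using hF ⟨ρ x, LinearMap.mem_range_self _ x⟩, ?_⟩
  rw [hFφ, mul_comm]
  exact opNorm_comp_le φ σ

namespace lp

variable {ι κ 𝕜 E F : Type*} [NontriviallyNormedField 𝕜]
  [NormedAddCommGroup E] [NormedSpace 𝕜 E] [NormedAddCommGroup F] [NormedSpace 𝕜 F]

theorem hasSum_norm_one (f : ℓ¹(ι, E)) : HasSum (fun i => ‖f i‖) ‖f‖ := by
  simpa using lp.hasSum_norm (p := 1) (by norm_num) f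

theorem hasSum_tsumCLM [CompleteSpace E] (f : ℓ¹(ι, E)) : HasSum f (tsumCLM 𝕜 ι E f) :=
  (lp.memℓp f).summable_of_one.hasSum

theorem mapCLM_single [DecidableEq ι] (T : ι → E →L[𝕜] F) {K : ℝ} (hK : 0 ≤ K)
    (hTK : ∀ i, ‖T i‖ ≤ K) (i : ι) (a : E) :
    mapCLM 1 T hK hTK (lp.single 1 i a) = lp.single 1 i (T i a) := by
  ext j
  rcases eq_or_ne j i with rfl | hj <;> simp [*]

section TsumMapCLM

variable [CompleteSpace F] (T : ι → E →L[𝕜] F) {K : ℝ} (hK : 0 ≤ K) (hTK : ∀ i, ‖T i‖ ≤ K)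

noncomputable def tsumMapCLM : ℓ¹(ι, E) →L[𝕜] F :=
  tsumCLM 𝕜 ι F ∘L mapCLM 1 T hK hTK

theorem hasSum_tsumMapCLM (f : ℓ¹(ι, E)) :
    HasSum (fun i => T i (f i)) (tsumMapCLM T hK hTK f) :=
  hasSum_tsumCLM (𝕜 := 𝕜) (mapCLM 1 T hK hTK f)

theorem norm_tsumMapCLM_le : ‖tsumMapCLM T hK hTK‖ ≤ K :=
  (opNorm_comp_le _ _).trans <| (mul_le_mul norm_tsumCLM_le (norm_mapCLM_le _ _ _ _)
    (norm_nonneg _) zero_le_one).trans_eq (one_mul K)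

theorem tsumMapCLM_single [DecidableEq ι] (i : ι) (a : E) :
    tsumMapCLM T hK hTK (lp.single 1 i a) = T i a := by
  simp [tsumMapCLM, mapCLM_single]

end TsumMapCLM

section CompInjective

variable (𝕜) {h : ι → κ} (hh : Injective h)

noncomputable def compInjective : ℓ¹(κ, E) →L[𝕜] ℓ¹(ι, E) :=
  LinearMap.mkContinuous
    { toFun := fun f => ⟨f ∘ h, memℓp_gen <| by
        simp only [ENNReal.toReal_one, Real.rpow_one]
        exact (hasSum_norm_one f).summable.comp_injective hh⟩
      map_add' := fun _ _ => rfl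
      map_smul' := fun _ _ => rfl } 1
    fun f => by
      rw [one_mul]
      exact hasSum_le_inj h hh (fun _ _ => norm_nonneg _) (fun _ => le_rfl)
        (hasSum_norm_one _) (hasSum_norm_one f)

@[simp]
theorem coe_compInjective (f : ℓ¹(κ, E)) : ⇑(compInjective 𝕜 hh f) = f ∘ h := rfl

theorem norm_compInjective_le : ‖compInjective (E := E) 𝕜 hh‖ ≤ 1 :=
  LinearMap.mkContinuous_norm_le _ zero_le_one _

theorem compInjective_single [DecidableEq ι] [DecidableEq κ] (i : ι) (a : E) :
    compInjective 𝕜 hh (lp.single 1 (h i) a) = lp.single 1 i a := by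
  ext j
  simp [lp.coeFn_single, Pi.single_apply, hh.eq_iff]

end CompInjective

end lp

theorem stmt10_general {G : Type*} [DecidableEq G]
    {A : Type*} [NonUnitalNormedRing A] [NormedSpace ℂ A]
    [CompleteSpace A]
    (ρ : lp (fun _ : ℕ => ℂ) 1 →L[ℂ] A)
    (hρ_inj : Function.Injective ρ)
    (hρ_closed : IsClosed (Set.range ρ))
    (h : ℕ → G) (h_inj : Function.Injective h)
    (E : ℕ → StrongDual ℂ A)
    (hE_ext : ∀ (i : ℕ) (x : lp (fun _ : ℕ => ℂ) 1), E i (ρ x) = x i)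
    (hE_min : ∀ (i : ℕ) (F : StrongDual ℂ A), (∀ x : lp (fun _ : ℕ => ℂ) 1, F (ρ x) = x i) →
      ‖E i‖ ≤ ‖F‖) :
    ∃ η : lp (fun _ : G => ℂ) 1 →L[ℂ] StrongDual ℂ A,
      (∀ α : lp (fun _ : G => ℂ) 1, HasSum (fun i : ℕ => α (h i) • E i) (η α)) ∧
      ‖η‖ ≤ ⨆ i : ℕ, ‖E i‖ ∧
      ∃ τ : StrongDual ℂ (lp (fun _ : G => A) 1),
        (∀ (g : G) (a : A), τ (lp.single 1 g a) = η (lp.single 1 g 1) a) ∧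
        ∀ n : ℕ, τ (lp.single 1 (h n) (ρ (lp.single 1 n 1))) = 1 := by
  obtain ⟨C, hC0, hC⟩ := ρ.exists_extension_comp_norm_le hρ_inj hρ_closed
  have hEC (i : ℕ) : ‖E i‖ ≤ C := by
    obtain ⟨F, hFρ, hF⟩ := hC (lp.evalCLM ℂ (fun _ => ℂ) 1 i)
    have hev : ‖lp.evalCLM ℂ (fun _ : ℕ => ℂ) 1 i‖ ≤ 1 :=
      LinearMap.mkContinuous_norm_le _ zero_le_one _
    exact (hE_min i F hFρ).trans (hF.trans (mul_le_of_le_one_right hC0 hev))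
  have hES (i : ℕ) : ‖E i‖ ≤ ⨆ j, ‖E j‖ :=
    le_ciSup ⟨C, Set.forall_mem_range.2 hEC⟩ i
  have hS0 : 0 ≤ ⨆ j, ‖E j‖ := (norm_nonneg _).trans (hES 0)
  set η := lp.tsumMapCLM (fun i => toSpanSingleton ℂ (E i)) hS0
    (fun i => (norm_toSpanSingleton _).trans_le (hES i)) ∘L lp.compInjective ℂ h_inj
  have hηE (n : ℕ) : η (lp.single 1 (h n) 1) = E n := by
    simp [η, lp.compInjective_single, lp.tsumMapCLM_single]
  set τ := lp.tsumMapCLM (fun g => η (lp.single 1 g 1)) (norm_nonneg η)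
    (fun g => (η.le_opNorm _).trans_eq (by simp [lp.norm_single]))
  have hτ (g : G) (a : A) : τ (lp.single 1 g a) = η (lp.single 1 g 1) a :=
    lp.tsumMapCLM_single _ _ _ g a
  refine ⟨η, fun α => lp.hasSum_tsumMapCLM _ _ _ _, ?_, τ, hτ, fun n => ?_⟩
  · exact (opNorm_comp_le _ _).trans <| (mul_le_mul (lp.norm_tsumMapCLM_le _ _ _)
      (lp.norm_compInjective_le ℂ h_inj) (norm_nonneg _) hS0).trans_eq (mul_one _)
  · rw [hτ, hηE, hE_ext, lp.single_apply_self]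

/-- with `ρ : (ℓ¹(ℕ), •) → A` an algebra isomorphism onto a closed complemented
subspace, pairwise distinct `{hᵢ} ⊆ G`, and `Eᵢ* ∈ A*` Hahn–Banach extensions of the coordinate
functionals `ρ({xⱼ}ⱼ) ↦ xᵢ` on `ρ(ℓ¹(ℕ))`, the map `η : ℓ¹(G) → A*`,
`η(Σ α_g δ_g) = Σᵢ α_{hᵢ} Eᵢ*`, is a well-defined bounded linear operator with
`‖η‖ ≤ supᵢ ‖Eᵢ*‖`, and `τ = θ(η) ∈ (ℓ¹(G) ⊗̂ A)* = ℓ¹(G, A)*` satisfies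
`τ(δ_{hₙ} ⊗ ρ(eₙ)) = 1` for every `n`. -/
theorem stmt10 {G : Type*} [Group G] [Infinite G] [DecidableEq G]
    {A : Type*} [NonUnitalNormedRing A] [NormedSpace ℂ A]
    [IsScalarTower ℂ A A] [SMulCommClass ℂ A A] [CompleteSpace A]
    (ρ : lp (fun _ : ℕ => ℂ) 1 →L[ℂ] A)
    (hρ_inj : Function.Injective ρ)
    (hρ_mul : ∀ a b ab : lp (fun _ : ℕ => ℂ) 1, (∀ k, ab k = a k * b k) → ρ ab = ρ a * ρ b)
    (hρ_closed : IsClosed (Set.range ρ))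
    (hρ_compl : ∃ C : Submodule ℂ A, IsClosed (C : Set A) ∧
      (∀ a : A, ∃ b ∈ LinearMap.range (ρ : lp (fun _ : ℕ => ℂ) 1 →ₗ[ℂ] A), ∃ c ∈ C, a = b + c) ∧
      (∀ b ∈ LinearMap.range (ρ : lp (fun _ : ℕ => ℂ) 1 →ₗ[ℂ] A), ∀ c ∈ C, ‖b + c‖ = ‖b‖ + ‖c‖))
    (h : ℕ → G) (h_inj : Function.Injective h)
    (E : ℕ → StrongDual ℂ A)
    (hE_ext : ∀ (i : ℕ) (x : lp (fun _ : ℕ => ℂ) 1), E i (ρ x) = x i)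
    (hE_min : ∀ (i : ℕ) (F : StrongDual ℂ A), (∀ x : lp (fun _ : ℕ => ℂ) 1, F (ρ x) = x i) →
      ‖E i‖ ≤ ‖F‖) :
    ∃ η : lp (fun _ : G => ℂ) 1 →L[ℂ] StrongDual ℂ A,
      (∀ α : lp (fun _ : G => ℂ) 1, HasSum (fun i : ℕ => α (h i) • E i) (η α)) ∧
      ‖η‖ ≤ ⨆ i : ℕ, ‖E i‖ ∧
      ∃ τ : StrongDual ℂ (lp (fun _ : G => A) 1),
        (∀ (g : G) (a : A), τ (lp.single 1 g a) = η (lp.single 1 g 1) a) ∧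
        ∀ n : ℕ, τ (lp.single 1 (h n) (ρ (lp.single 1 n 1))) = 1 :=
  stmt10_general ρ hρ_inj hρ_closed h h_inj E hE_ext hE_min
end
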